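/- In the side-by-side example, the prioritized specification (φ₁, φ₂) is not admissible for the ego car: there is no dominant strategy, i.e., for every strategy s : List A → A there exist a strategy t and an other-car input sequence γ : ℕ → A with level(t, γ) > level(s, γ). -/
import Mathlib


/-- Actions of a car: accelerate, keep speed, decelerate. -/
inductive A : Type
  | acc : A
  | keep : A
  | dec : A
deriving DecidableEq

/-- Ego's action at step `n` when following strategy `s : List A → A` against
the other car's input sequence `γ : ℕ → A`: `s [γ 0, …, γ (n−1)]`. -/
def ego (s : List A → A) (γ : ℕ → A) (n : ℕ) : A :=
  s (List.ofFn fun i : Fin n => γ i)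

/-- Objective φ₁: eventually the cars are not side by side, i.e., at some step
ego's and the other car's actions differ. -/
def phi1 (s : List A → A) (γ : ℕ → A) : Prop :=
  ∃ n, ego s γ n ≠ γ n

/-- Objective φ₂: ego always keeps its speed. -/
def phi2 (s : List A → A) (γ : ℕ → A) : Prop :=
  ∀ n, ego s γ n = A.keep

open Classical in
/-- Satisfaction level: `2` if φ₁ ∧ φ₂ hold, `1` if φ₁ holds and φ₂ fails,
`0` if φ₁ fails. -/
noncomputable def level (s : List A → A) (γ : ℕ → A) : ℕ :=
  if phi1 s γ ∧ phi2 s γ then 2 else if phi1 s γ then 1 else 0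

/-- The prioritized specification (φ₁, φ₂) is not admissible for the ego car:
no strategy is dominant. -/
theorem not_admissible :
    ∀ s : List A → A, ∃ (t : List A → A) (γ : ℕ → A),
      level s γ < level t γ := by
  intro s
  -- history that always copies ego's own action
  let hist : ℕ → List A := fun n => Nat.rec [] (fun _ h => h ++ [s h]) n
  let γ : ℕ → A := fun n => s (hist n)
  have hhist : ∀ n, (List.ofFn fun i : Fin n => γ i) = hist n := by
    intro n
    induction n with
    | zero => rfl
    | succ n ih =>
      rw [List.ofFn_succ']
      show ((List.ofFn fun i : Fin n => γ i).concat (γ n)) = hist n ++ [s (hist n)]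
      rw [ih, List.concat_eq_append]
  have hcopy : ∀ n, ego s γ n = γ n := by
    intro n; unfold ego; rw [hhist]
  have hs1 : ¬ phi1 s γ := by
    rintro ⟨n, hn⟩; exact hn (hcopy n)
  -- a strategy that differs at step 0
  let t : List A → A := fun l => if s l = A.keep then A.acc else A.keep
  have ht1 : phi1 t γ := by
    refine ⟨0, ?_⟩
    show t [] ≠ γ 0
    show (if s [] = A.keep then A.acc else A.keep) ≠ s []
    by_cases h : s [] = A.keep
    · rw [if_pos h, h]; intro he; exact A.noConfusion he
    · rw [if_neg h]; exact fun he => h he.symm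
  refine ⟨t, γ, ?_⟩
  unfold level
  rw [if_neg (fun h => hs1 h.1), if_neg hs1]
  by_cases h2 : phi2 t γ
  · rw [if_pos ⟨ht1, h2⟩]; norm_num
  · rw [if_neg (fun h => h2 h.2), if_pos ht1]; norm_num
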